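/- arXiv:2605.30892 — 2 statements merged into one kernel-verified Lean document; each statement's English description precedes it below -/
import Mathlib

section
/- If a function δ: (0,B] → (0,∞) is continuous and strictly decreasing, and two devices satisfy ζᵢ + δᵢ(b) → ∞ as b → 0⁺ with ζᵢ + δᵢ(B) < ζⱼ + δⱼ(B), then there exists a unique b̃ⱼ ∈ (0, B) such that ζᵢ + δᵢ(B − b̃ⱼ) = ζⱼ + δⱼ(b̃ⱼ) (existence and uniqueness of the simultaneous-completion allocation). -/
/-- Existence and uniqueness of the simultaneous-completion allocation: if `δᵢ, δⱼ` are
continuous and strictly decreasing on `(0, B]`, blow up as `b → 0⁺`, and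
`ζᵢ + δᵢ(B) < ζⱼ + δⱼ(B)`, then there is a unique `b̃ⱼ ∈ (0, B)` with
`ζᵢ + δᵢ(B − b̃ⱼ) = ζⱼ + δⱼ(b̃ⱼ)`. -/
theorem simultaneous_completion_exists_unique (ζi ζj B : ℝ) (δi δj : ℝ → ℝ) (hB : 0 < B)
    (hδi_cont : ContinuousOn δi (Set.Ioc 0 B)) (hδj_cont : ContinuousOn δj (Set.Ioc 0 B))
    (hδi : StrictAntiOn δi (Set.Ioc 0 B)) (hδj : StrictAntiOn δj (Set.Ioc 0 B))
    (hδi_pos : ∀ b ∈ Set.Ioc (0:ℝ) B, 0 < δi b) (hδj_pos : ∀ b ∈ Set.Ioc (0:ℝ) B, 0 < δj b)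
    (hδi_top : Filter.Tendsto (fun b => ζi + δi b) (nhdsWithin 0 (Set.Ioi 0)) Filter.atTop)
    (hδj_top : Filter.Tendsto (fun b => ζj + δj b) (nhdsWithin 0 (Set.Ioi 0)) Filter.atTop)
    (hlt : ζi + δi B < ζj + δj B) :
    ∃! btj : ℝ, btj ∈ Set.Ioo 0 B ∧ ζi + δi (B - btj) = ζj + δj btj := by
  have hB2 : (0:ℝ) < B / 2 := half_pos hB
  set f : ℝ → ℝ := fun b => (ζj + δj b) - (ζi + δi (B - b)) with hf
  -- membership facts
  have hmem : ∀ b ∈ Set.Ioo (0:ℝ) B, b ∈ Set.Ioc (0:ℝ) B := fun b hb => ⟨hb.1, le_of_lt hb.2⟩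
  have hmem' : ∀ b ∈ Set.Ioo (0:ℝ) B, B - b ∈ Set.Ioc (0:ℝ) B :=
    fun b hb => ⟨by linarith [hb.2], by linarith [hb.1]⟩
  -- strict antitonicity of f on Ioo 0 B
  have hanti : ∀ a b, a ∈ Set.Ioo (0:ℝ) B → b ∈ Set.Ioo (0:ℝ) B → a < b → f b < f a := by
    intro a b ha hb hab
    have h1 : δj b < δj a := hδj (hmem a ha) (hmem b hb) hab
    have h2 : δi (B - a) < δi (B - b) := hδi (hmem' b hb) (hmem' a ha) (by linarith)
    simp only [hf]; linarith
  -- small b with f b > 0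
  have hsmall : ∀ᶠ b in nhdsWithin (0:ℝ) (Set.Ioi 0), b < B / 2 :=
    eventually_nhdsWithin_of_eventually_nhds (eventually_lt_nhds hB2)
  have hsmall0 : ∀ᶠ b in nhdsWithin (0:ℝ) (Set.Ioi 0), (0:ℝ) < b :=
    eventually_mem_nhdsWithin
  obtain ⟨b₁, ⟨hjb₁, hb₁pos⟩, hb₁lt⟩ :=
    (((hδj_top.eventually_ge_atTop (ζi + δi (B / 2) + 1)).and hsmall0).and hsmall).exists
  have hb₁B : b₁ ∈ Set.Ioo (0:ℝ) B := ⟨hb₁pos, by linarith⟩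
  have hfb₁ : 0 < f b₁ := by
    have hδle : δi (B - b₁) ≤ δi (B / 2) := by
      rcases eq_or_lt_of_le (show B / 2 ≤ B - b₁ by linarith) with h | h
      · rw [← h]
      · exact le_of_lt (hδi ⟨hB2, by linarith⟩ (hmem' b₁ hb₁B) h)
    simp only [hf]; linarith
  -- b near B with f b < 0
  obtain ⟨c, ⟨hic, hcpos⟩, hclt⟩ :=
    (((hδi_top.eventually_ge_atTop (ζj + δj (B / 2) + 1)).and hsmall0).and hsmall).exists
  set b₂ : ℝ := B - c with hb₂def
  have hb₂B : b₂ ∈ Set.Ioo (0:ℝ) B := ⟨by simp only [hb₂def]; linarith, by simp only [hb₂def]; linarith⟩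
  have hfb₂ : f b₂ < 0 := by
    have hδle : δj b₂ ≤ δj (B / 2) := by
      rcases eq_or_lt_of_le (show B / 2 ≤ b₂ by simp only [hb₂def]; linarith) with h | h
      · rw [← h]
      · exact le_of_lt (hδj ⟨hB2, by linarith⟩ (hmem b₂ hb₂B) h)
    have : B - b₂ = c := by simp [hb₂def]
    simp only [hf, this]; linarith
  have hb₁b₂ : b₁ < b₂ := by
    by_contra h
    push_neg at h
    rcases eq_or_lt_of_le h with h | h
    · rw [h] at hfb₂; linarith
    · linarith [hanti b₂ b₁ hb₂B hb₁B h]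
  -- continuity of f on Icc b₁ b₂
  have hsub : Set.Icc b₁ b₂ ⊆ Set.Ioo (0:ℝ) B := Set.Icc_subset_Ioo hb₁B.1 hb₂B.2
  have hcont : ContinuousOn f (Set.Icc b₁ b₂) := by
    apply ContinuousOn.sub
    · exact continuousOn_const.add (hδj_cont.comp continuousOn_id
        (fun x hx => hmem x (hsub hx)))
    · exact continuousOn_const.add (hδi_cont.comp
        ((continuous_const.sub continuous_id).continuousOn)
        (fun x hx => hmem' x (hsub hx)))
  have hivt := intermediate_value_Icc' (le_of_lt hb₁b₂) hcont
  obtain ⟨x, hx, hfx⟩ := hivt ⟨le_of_lt hfb₂, le_of_lt hfb₁⟩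
  refine ⟨x, ⟨hsub hx, ?_⟩, ?_⟩
  · simp only [hf] at hfx; linarith
  · intro y ⟨hyB, hy⟩
    have hfy : f y = 0 := by simp only [hf]; linarith
    have hfx0 : f x = 0 := hfx
    rcases lt_trichotomy y x with h | h | h
    · exfalso; have := hanti y x hyB (hsub hx) h; rw [hfy, hfx0] at this; exact lt_irrefl 0 this
    · exact h
    · exfalso; have := hanti x y (hsub hx) hyB h; rw [hfy, hfx0] at this; exact lt_irrefl 0 this
end

section
/- Sequential total completion for two identical devices: if ζᵢ = ζⱼ = ζ and δᵢ = δⱼ = δ, the sequential full-bandwidth policy completes at ζ + 2δ(B), while the simultaneous equal-split policy completes at ζ + δ(B/2); sequential is better iff 2δ(B) ≤ δ(B/2), which holds iff R(B) ≥ 2R(B/2) — impossible by strict concavity of R with R(0⁺)=0; hence for identical devices simultaneous equal-split is strictly better. -/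
/-- For two identical devices (same `ζ` and channel), sequential full-bandwidth completes
at `ζ + 2δ(B)` and simultaneous equal-split at `ζ + δ(B/2)`; sequential is better iff
`2δ(B) ≤ δ(B/2)` iff `R(B) ≥ 2R(B/2)`, which is impossible, so simultaneous equal-split
is strictly better. -/
theorem identical_devices_simultaneous_better (W s B ζ : ℝ)
    (hW : 0 < W) (hs : 0 < s) (hB : 0 < B) :
    (2 * (W / (B * Real.logb 2 (1 + s / B))) ≤
        W / ((B / 2) * Real.logb 2 (1 + s / (B / 2))) ↔
      2 * ((B / 2) * Real.logb 2 (1 + s / (B / 2))) ≤ B * Real.logb 2 (1 + s / B)) ∧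
    B * Real.logb 2 (1 + s / B) < 2 * ((B / 2) * Real.logb 2 (1 + s / (B / 2))) ∧
    ζ + W / ((B / 2) * Real.logb 2 (1 + s / (B / 2))) <
      ζ + 2 * (W / (B * Real.logb 2 (1 + s / B))) := by
  set x := B * Real.logb 2 (1 + s / B) with hxdef
  set y := (B / 2) * Real.logb 2 (1 + s / (B / 2)) with hydef
  have hB2 : (0:ℝ) < B / 2 := by linarith
  have h1 : (1:ℝ) < 1 + s / B := by
    have := div_pos hs hB; linarith
  have h2 : (1:ℝ) < 1 + s / (B / 2) := by
    have := div_pos hs hB2; linarith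
  have hlog : Real.logb 2 (1 + s / B) < Real.logb 2 (1 + s / (B / 2)) := by
    apply Real.logb_lt_logb (by norm_num) (by linarith)
    have : s / B < s / (B / 2) := by
      apply div_lt_div_of_pos_left hs hB2; linarith
    linarith
  have hx : 0 < x := mul_pos hB (Real.logb_pos (by norm_num) h1)
  have hy : 0 < y := mul_pos hB2 (Real.logb_pos (by norm_num) h2)
  have hkey : x < 2 * y := by
    rw [hxdef, hydef]
    have : 2 * (B / 2 * Real.logb 2 (1 + s / (B / 2)))
        = B * Real.logb 2 (1 + s / (B / 2)) := by ring
    rw [this]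
    exact mul_lt_mul_of_pos_left hlog hB
  refine ⟨?_, hkey, ?_⟩
  · rw [show 2 * (W / x) = (2 * W) / x by ring, div_le_div_iff₀ hx hy]
    constructor
    · intro h; nlinarith
    · intro h; nlinarith
  · have : W / y < 2 * (W / x) := by
      rw [show 2 * (W / x) = (2 * W) / x by ring, div_lt_div_iff₀ hy hx]
      nlinarith
    linarith
end
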